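/- A rational prime p ≡ 1 (mod 3) can be written as p = a² − ab + b² for some integers a, b. -/

import Mathlib

/-!
Since `3 ∣ p - 1`, there is a primitive cube root of unity `ω` modulo `p`, and then
`a ≡ -ω b` forces `p ∣ a² - ab + b²`. Thue's pigeonhole argument gives such `(a, b) ≠ 0` with
`|a|, |b| ≤ ⌊√p⌋`, so `0 < a² - ab + b² < 3p`, and the value `2p` is excluded modulo `4`.
-/

theorem FiniteField.exists_sq_add_self_add_one_eq_zero {F : Type*} [Field F] [Fintype F]
    (h : Fintype.card F % 3 = 1) : ∃ ω : F, ω ^ 2 + ω + 1 = 0 := by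
  classical
  have : Fact (Nat.Prime 3) := ⟨Nat.prime_three⟩
  obtain ⟨u, hu⟩ := exists_prime_orderOf_dvd_card 3 (G := Fˣ) (by rw [Fintype.card_units]; omega)
  have hω : IsPrimitiveRoot (u : F) 3 := IsPrimitiveRoot.coe_units_iff.2 (hu ▸ .orderOf u)
  have hsum := hω.geom_sum_eq_zero (by norm_num)
  simp only [Finset.sum_range_succ, Finset.sum_range_zero, pow_zero, pow_one] at hsum
  exact ⟨u, by linear_combination hsum⟩

theorem exists_abs_le_intCast_eq_mul_intCast {R : Type*} [CommRing R] [Fintype R] (c : R)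
    (m : ℕ) (h : Fintype.card R < (m + 1) ^ 2) :
    ∃ a b : ℤ, (a, b) ≠ (0, 0) ∧ |a| ≤ m ∧ |b| ≤ m ∧ (a : R) = c * b := by
  obtain ⟨x, y, hxy, hf⟩ := Fintype.exists_ne_map_eq_of_card_lt
    (fun z : Fin (m + 1) × Fin (m + 1) => (z.1 : R) - c * z.2) (by simpa [sq] using h)
  refine ⟨(x.1 : ℤ) - y.1, (x.2 : ℤ) - y.2, ?_, ?_, ?_, ?_⟩
  · intro h0
    simp only [Prod.mk.injEq, sub_eq_zero, Nat.cast_inj] at h0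
    exact hxy (Prod.ext (Fin.ext h0.1) (Fin.ext h0.2))
  · exact abs_le.2 ⟨by omega, by omega⟩
  · exact abs_le.2 ⟨by omega, by omega⟩
  · push_cast
    linear_combination hf

theorem sq_sub_mul_add_sq_pos {a b : ℤ} (h : (a, b) ≠ (0, 0)) : 0 < a ^ 2 - a * b + b ^ 2 := by
  rcases eq_or_ne b 0 with rfl | hb
  · have ha : a ≠ 0 := by simpa using h
    nlinarith [sq_pos_of_ne_zero ha]
  · nlinarith [sq_nonneg (2 * a - b), sq_pos_of_ne_zero hb]

theorem sq_sub_mul_add_sq_le {a b : ℤ} {m : ℕ} (ha : |a| ≤ m) (hb : |b| ≤ m) :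
    a ^ 2 - a * b + b ^ 2 ≤ 3 * m ^ 2 := by
  have hab : -(a * b) ≤ m ^ 2 := by
    rw [sq]
    exact (neg_le_abs _).trans (abs_mul a b ▸ mul_le_mul ha hb (abs_nonneg b) (by positivity))
  nlinarith [sq_le_sq' (abs_le.1 ha).1 (abs_le.1 ha).2, sq_le_sq' (abs_le.1 hb).1 (abs_le.1 hb).2]

theorem sq_sub_mul_add_sq_ne_two_mul_of_odd (a b : ℤ) {m : ℤ} (hm : Odd m) :
    a ^ 2 - a * b + b ^ 2 ≠ 2 * m := by
  obtain ⟨k, rfl⟩ := hm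
  intro h
  have h4 := congrArg (Int.cast : ℤ → ZMod 4) h
  push_cast at h4
  have key : ∀ u v w : ZMod 4, u ^ 2 - u * v + v ^ 2 ≠ 2 * (2 * w + 1) := by decide
  exact key _ _ _ h4

theorem sq_sub_mul_add_sq_eq_of_dvd {a b p : ℤ} (hp : Odd p) (hdvd : p ∣ a ^ 2 - a * b + b ^ 2)
    (hpos : 0 < a ^ 2 - a * b + b ^ 2) (hlt : a ^ 2 - a * b + b ^ 2 < 3 * p) :
    a ^ 2 - a * b + b ^ 2 = p := by
  obtain ⟨k, hk⟩ := hdvd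
  have hp0 : 0 ≤ p := by nlinarith
  have hk0 : 0 < k := pos_of_mul_pos_right (hk ▸ hpos) hp0
  have hk3 : k < 3 := lt_of_mul_lt_mul_left (hk ▸ hlt.trans_eq (mul_comm _ _)) hp0
  interval_cases k
  · rw [hk, mul_one]
  · exact absurd (hk.trans (mul_comm _ _)) (sq_sub_mul_add_sq_ne_two_mul_of_odd a b hp)

/-- A prime p ≡ 1 (mod 3) is represented by the Eisenstein norm form a² − ab + b². -/
theorem prime_one_mod_three_eq_norm_form (p : ℕ) (hp : p.Prime) (h : p % 3 = 1) :
    ∃ a b : ℤ, (p : ℤ) = a ^ 2 - a * b + b ^ 2 := by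
  have : Fact p.Prime := ⟨hp⟩
  obtain ⟨ω, hω⟩ :=
    FiniteField.exists_sq_add_self_add_one_eq_zero (F := ZMod p) (by rwa [ZMod.card])
  obtain ⟨a, b, hab0, ha, hb, hab⟩ := exists_abs_le_intCast_eq_mul_intCast (-ω) p.sqrt
    (by simpa [ZMod.card, sq] using Nat.lt_succ_sqrt p)
  have hdvd : (p : ℤ) ∣ a ^ 2 - a * b + b ^ 2 := by
    rw [← ZMod.intCast_zmod_eq_zero_iff_dvd]
    push_cast
    linear_combination (b : ZMod p) ^ 2 * hω + (a - (1 + ω) * b) * hab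
  have hsqrt : p.sqrt * p.sqrt < p :=
    (Nat.sqrt_le p).lt_of_ne fun hsq => hp.prime.not_isSquare ⟨_, hsq.symm⟩
  have hlt : a ^ 2 - a * b + b ^ 2 < 3 * p :=
    (sq_sub_mul_add_sq_le ha hb).trans_lt (by rw [sq]; exact_mod_cast by omega)
  have hodd : Odd (p : ℤ) := by exact_mod_cast hp.odd_of_ne_two (by omega)
  exact ⟨a, b, (sq_sub_mul_add_sq_eq_of_dvd hodd hdvd (sq_sub_mul_add_sq_pos hab0) hlt).symm⟩
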